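/- arXiv:2504.18832 — 4 statements merged into one kernel-verified Lean document; each statement's English description precedes it below -/
import Mathlib

section
/- Let A, B > 0 and let a, b be coprime positive integers with a odd. Then the set of pairs (γ₁, γ₂) with 0 ≤ γ₁ < γ₂ < 2π such that (A cos(aγ₁), B sin(bγ₁)) = (A cos(aγ₂), B sin(bγ₂)) is finite. In particular the 2D Lissajous curve is non-degenerate: it has at most finitely many self-intersection points and no doubly traversed arc. -/
open Real

private lemma lissajous_aux
    (a b : ℕ) (ha : 0 < a) (hb : 0 < b)
    (hab : Nat.Coprime a b) (haodd : Odd a)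
    (x y : ℝ) (hx0 : 0 ≤ x) (hxy : x < y) (hy2 : y < 2 * π)
    (hc : Real.cos (a * x) = Real.cos (a * y))
    (hs : Real.sin (b * x) = Real.sin (b * y)) :
    ∃ n m : ℤ, x = n * π / (2 * a * b) ∧ y = m * π / (2 * a * b) := by
  have hπ := Real.pi_pos
  have ha' : (0:ℝ) < a := by exact_mod_cast ha
  have hb' : (0:ℝ) < b := by exact_mod_cast hb
  have hcop : IsCoprime (a : ℤ) (b : ℤ) := Nat.isCoprime_iff_coprime.mpr hab
  obtain ⟨k, hk | hk⟩ := Real.cos_eq_cos_iff.mp hc <;>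
    obtain ⟨m, hm | hm⟩ := Real.sin_eq_sin_iff.mp hs
  · -- both "+" : a(y-x)=2kπ, b(y-x)=2mπ : impossible
    exfalso
    have hkm : (k:ℝ) * b * (2 * π) = m * a * (2 * π) := by
      linear_combination (a:ℝ) * hm - (b:ℝ) * hk
    have hkm' : (k:ℤ) * b = m * a := by
      have := mul_right_cancel₀ (by positivity : (2 * π : ℝ) ≠ 0) hkm
      exact_mod_cast this
    have hk0 : (0:ℝ) < k := by nlinarith
    have hka : (k:ℝ) < a := by nlinarith
    have hk0' : (0:ℤ) < k := by exact_mod_cast hk0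
    have hka' : (k:ℤ) < a := by exact_mod_cast hka
    have hdvd : (a:ℤ) ∣ k * b := ⟨m, by rw [hkm', mul_comm]⟩
    have : (a:ℤ) ∣ k := hcop.dvd_of_dvd_mul_right hdvd
    have := Int.le_of_dvd hk0' this
    omega
  · -- cos "+", sin "-" : y-x = 2kπ/a, y+x = (2m+1)π/b
    refine ⟨(2*m+1)*a - 2*k*b, (2*m+1)*a + 2*k*b, ?_, ?_⟩
    · rw [eq_div_iff (by positivity : (2*(a:ℝ)*b) ≠ 0)]
      push_cast
      linear_combination (a:ℝ) * hm - (b:ℝ) * hk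
    · rw [eq_div_iff (by positivity : (2*(a:ℝ)*b) ≠ 0)]
      push_cast
      linear_combination (a:ℝ) * hm + (b:ℝ) * hk
  · -- cos "-", sin "+" : y+x = 2kπ/a, y-x = 2mπ/b
    refine ⟨2*k*b - 2*m*a, 2*k*b + 2*m*a, ?_, ?_⟩
    · rw [eq_div_iff (by positivity : (2*(a:ℝ)*b) ≠ 0)]
      push_cast
      linear_combination (b:ℝ) * hk - (a:ℝ) * hm
    · rw [eq_div_iff (by positivity : (2*(a:ℝ)*b) ≠ 0)]
      push_cast
      linear_combination (b:ℝ) * hk + (a:ℝ) * hm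
  · -- both "-" : b·2k = a·(2m+1) : parity contradiction
    exfalso
    have hkm : (2:ℝ) * k * b * π = a * (2 * m + 1) * π := by
      linear_combination (a:ℝ) * hm - (b:ℝ) * hk
    have hkm' : (2:ℤ) * k * b = a * (2 * m + 1) := by
      have := mul_right_cancel₀ (by positivity : (π : ℝ) ≠ 0) hkm
      exact_mod_cast this
    have heven : Even ((2:ℤ) * k * b) := ⟨k * b, by ring⟩
    have hodd : Odd ((a:ℤ) * (2 * m + 1)) := by
      refine Odd.mul ?_ ⟨m, rfl⟩
      exact_mod_cast haodd
    rw [hkm'] at heven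
    exact ((Int.not_odd_iff_even.mpr heven)) hodd

/-- For a 2D Lissajous curve with positive amplitudes and coprime positive
integer frequencies `a, b` with `a` odd, the set of parameter pairs
`0 ≤ γ₁ < γ₂ < 2π` giving the same point of the curve is finite, i.e. the
curve has at most finitely many self-intersections and no doubly traversed
arc (non-degeneracy). -/
theorem lissajous2d_nondegenerate
    (A B : ℝ) (hA : 0 < A) (hB : 0 < B)
    (a b : ℕ) (ha : 0 < a) (hb : 0 < b)
    (hab : Nat.Coprime a b) (haodd : Odd a) :
    Set.Finite {p : ℝ × ℝ | 0 ≤ p.1 ∧ p.1 < p.2 ∧ p.2 < 2 * π ∧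
      ((A * Real.cos (a * p.1), B * Real.sin (b * p.1)) : ℝ × ℝ) =
        (A * Real.cos (a * p.2), B * Real.sin (b * p.2))} := by
  have hπ := Real.pi_pos
  have ha' : (0:ℝ) < a := by exact_mod_cast ha
  have hb' : (0:ℝ) < b := by exact_mod_cast hb
  apply Set.Finite.subset
    (((Set.finite_Icc ((0:ℤ), (0:ℤ)) ((4*a*b : ℤ), (4*a*b : ℤ)))).image
      (fun q : ℤ × ℤ => (((q.1 : ℝ) * π / (2 * a * b), (q.2 : ℝ) * π / (2 * a * b)) : ℝ × ℝ)))
  rintro ⟨x, y⟩ ⟨hx0, hxy, hy2, heq⟩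
  simp only [Prod.mk.injEq] at heq
  have hc : Real.cos (a * x) = Real.cos (a * y) := mul_left_cancel₀ hA.ne' heq.1
  have hs : Real.sin (b * x) = Real.sin (b * y) := mul_left_cancel₀ hB.ne' heq.2
  obtain ⟨n, m, hx, hy⟩ := lissajous_aux a b ha hb hab haodd x y hx0 hxy hy2 hc hs
  have hy0 : (0:ℝ) ≤ y := le_trans hx0 hxy.le
  have hx2 : x < 2 * π := lt_trans hxy hy2
  have hd : (0:ℝ) < 2 * a * b := by positivity
  have hn : (n:ℝ) * π = x * (2 * a * b) := by
    rw [hx]; field_simp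
  have hm : (m:ℝ) * π = y * (2 * a * b) := by
    rw [hy]; field_simp
  have hn0 : (0:ℝ) ≤ n := by nlinarith [mul_nonneg hx0 hd.le]
  have hm0 : (0:ℝ) ≤ m := by nlinarith [mul_nonneg hy0 hd.le]
  have hn4 : (n:ℝ) ≤ 4 * a * b := by nlinarith [mul_lt_mul_of_pos_right hx2 hd]
  have hm4 : (m:ℝ) ≤ 4 * a * b := by nlinarith [mul_lt_mul_of_pos_right hy2 hd]
  refine ⟨(n, m), ?_, ?_⟩
  · simp only [Set.mem_Icc, Prod.le_def]
    constructor
    · exact ⟨by exact_mod_cast hn0, by exact_mod_cast hm0⟩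
    · exact ⟨by exact_mod_cast hn4, by exact_mod_cast hm4⟩
  · simp [hx, hy]
end

section
/- Let A, B > 0 and let a, b be coprime positive integers with a odd. Then for every point q = (q_x, q_y) in the rectangle [−A, A] × [−B, B] there exists γ ∈ ℝ such that the Euclidean distance from q to the Lissajous point (A cos(aγ), B sin(bγ)) is at most max{ B sin(π/(2a)), A sin(π/(2b)) }. In particular, if each robot has sensing radius r_s > max{ B sin(π/(2a)), A sin(π/(2b)) }, then a robot sweeping the entire Lissajous curve covers the whole rectangle (complete coverage, Property 1, eq. (6) of the paper). -/
/-!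
Match the first coordinate exactly: with `c = arccos (qx / A)`, the parameters `γ = (±c + 2πm) / a`
all satisfy `A cos (a γ) = qx`, and because `a` is odd and coprime to `b` the second coordinates
`sin (b γ)` they produce include `sin (b c / a + k π / a)` for every `k ∈ ℤ`: the sines of
an arithmetic progression of step `h = π / a ≤ π`. Every value `sin σ` is within `sin (h / 2)`
of one of these. Take the two terms `m ∓ h/2` around `σ`: if `sin σ` lies between their sines,
one of them is within half the gap `|2 sin (h/2) cos m|`; otherwise the product of the two
differences equals `(cos (σ - m) - cos (h/2)) (-cos (h/2) - cos (σ + m))`, which is at most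
`(1 - cos (h/2))² ≤ sin² (h/2)`.
-/

open Real

theorem sin_sub_sin_mul_sin_sub_sin (σ m d : ℝ) :
    (sin σ - sin (m - d)) * (sin σ - sin (m + d)) =
      (cos d - cos (σ - m)) * (cos d + cos (σ + m)) := by
  simp only [sin_add, sin_sub, cos_add, cos_sub]
  linear_combination cos m ^ 2 * sin_sq_add_cos_sq σ +
    (cos d ^ 2 - sin σ ^ 2) * sin_sq_add_cos_sq m - cos m ^ 2 * sin_sq_add_cos_sq d

theorem one_sub_cos_le_sin {t : ℝ} (h0 : 0 ≤ t) (h1 : t ≤ π / 2) : 1 - cos t ≤ sin t := by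
  have hs : 0 ≤ sin t := sin_nonneg_of_nonneg_of_le_pi h0 (by linarith [pi_pos])
  have hc : 0 ≤ cos t := cos_nonneg_of_mem_Icc ⟨by linarith [pi_pos], h1⟩
  nlinarith [sin_sq_add_cos_sq t]

theorem abs_sin_sub_le_sin_or_of_mem_Icc {σ m d : ℝ} (hd0 : 0 ≤ d) (hdπ : d ≤ π / 2)
    (hσ : σ ∈ Set.Icc (m - d) (m + d)) :
    |sin (m - d) - sin σ| ≤ sin d ∨ |sin (m + d) - sin σ| ≤ sin d := by
  rw [abs_sub_comm, abs_sub_comm (sin (m + d))]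
  set x := sin σ - sin (m - d)
  set y := sin σ - sin (m + d)
  have hsd : 0 ≤ sin d := sin_nonneg_of_nonneg_of_le_pi hd0 (by linarith [pi_pos])
  have hsub : |x - y| ≤ 2 * sin d := by
    have : x - y = 2 * sin d * cos m := by
      simp only [x, y, sin_add, sin_sub]; ring
    rw [this, abs_mul, abs_of_nonneg (by positivity)]
    nlinarith [abs_cos_le_one m]
  have hmul : 0 ≤ x * y → x * y ≤ sin d ^ 2 := by
    intro hxy
    have hcos : cos d ≤ cos (σ - m) := by
      rw [← cos_abs (σ - m)]
      exact cos_le_cos_of_nonneg_of_le_pi (abs_nonneg _) (by linarith [pi_pos])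
        (abs_le.mpr ⟨by linarith [hσ.1], by linarith [hσ.2]⟩)
    have hxy' : x * y = (cos (σ - m) - cos d) * (-cos d - cos (σ + m)) := by
      simp only [x, y, sin_sub_sin_mul_sin_sub_sin]; ring
    have := one_sub_cos_le_sin hd0 hdπ
    rw [hxy'] at hxy ⊢
    nlinarith [cos_le_one (σ - m), neg_one_le_cos (σ + m)]
  by_contra! h
  obtain ⟨hx, hy⟩ := h
  have hlt : sin d * sin d < |x| * |y| := mul_lt_mul'' hx hy hsd hsd
  rcases le_total 0 (x * y) with hxy | hxy
  · rw [← abs_mul, abs_of_nonneg hxy] at hlt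
    nlinarith [hmul hxy]
  · have hsq : |x - y| ^ 2 = (|x| + |y|) ^ 2 := by
      rw [sq_abs, add_sq, sq_abs, sq_abs, mul_assoc, ← abs_mul, abs_of_nonpos hxy]; ring
    have := (sq_eq_sq₀ (abs_nonneg _) (by positivity)).mp hsq
    linarith

theorem exists_abs_sin_add_int_mul_sub_sin_le {h : ℝ} (h0 : 0 < h) (hπ : h ≤ π) (φ σ : ℝ) :
    ∃ k : ℤ, |sin (φ + k * h) - sin σ| ≤ sin (h / 2) := by
  set k := ⌊(σ - φ) / h⌋
  have hk : k * h ≤ σ - φ := (le_div_iff₀ h0).mp (Int.floor_le _)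
  have hk' : σ - φ < (k + 1) * h := (div_lt_iff₀ h0).mp (Int.lt_floor_add_one _)
  have := abs_sin_sub_le_sin_or_of_mem_Icc (σ := σ) (m := φ + k * h + h / 2) (d := h / 2)
    (by linarith) (by linarith) ⟨by linarith, by linarith⟩
  rcases this with hle | hle
  · exact ⟨k, by convert hle using 4; ring⟩
  · exact ⟨k + 1, by convert hle using 4; push_cast; ring⟩

theorem exists_cos_mul_eq_and_sin_mul_eq {a b : ℕ} (hab : a.Coprime b) (ha : Odd a)
    (c : ℝ) (k : ℤ) :
    ∃ γ : ℝ, cos (a * γ) = cos c ∧ sin (b * γ) = sin (b * c / a + k * (π / a)) := by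
  obtain ⟨u, v, huv⟩ : IsCoprime ((2 * b : ℕ) : ℤ) a :=
    Nat.isCoprime_iff_coprime.mpr (Nat.Coprime.mul_left ha.coprime_two_left hab.symm)
  have haR : (a : ℝ) ≠ 0 := by exact_mod_cast ha.pos.ne'
  have hbm : (2 * b * (k * u) : ℝ) = k + a * (-k * v) := by
    have := congrArg (fun z : ℤ => (z : ℝ)) huv
    push_cast at this
    linear_combination k * this
  set γ₀ := (c + (k * u : ℤ) * (2 * π)) / a with hγ₀
  have hγa : a * γ₀ = c + (k * u : ℤ) * (2 * π) := by rw [hγ₀]; field_simp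
  have hγb : b * γ₀ = b * c / a + k * (π / a) + (-k * v : ℤ) * π := by
    rw [hγ₀]; field_simp; push_cast; linear_combination π * hbm
  -- `b γ₀` overshoots the target angle by `n π`, `n = -k v`; for odd `n` the reflection `-γ₀`
  -- keeps `cos (a γ)` and undoes the sign `(-1) ^ n`.
  rcases Int.even_or_odd (-k * v) with hn | hn
  · refine ⟨γ₀, ?_, ?_⟩
    · rw [hγa, cos_add_int_mul_two_pi]
    · rw [hγb, sin_add_int_mul_pi, hn.neg_one_zpow, one_mul]
  · refine ⟨-γ₀, ?_, ?_⟩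
    · rw [mul_neg, hγa, cos_neg, cos_add_int_mul_two_pi]
    · rw [mul_neg, hγb, sin_neg, sin_add_int_mul_pi, hn.neg_one_zpow]; ring

theorem lissajous_complete_coverage_general
    (A B : ℝ) (hA : 0 < A) (hB : 0 < B)
    (a b : ℕ) (ha : 0 < a)
    (hab : Nat.Coprime a b) (haodd : Odd a) :
    ∀ qx qy : ℝ, |qx| ≤ A → |qy| ≤ B →
      ∃ γ : ℝ,
        Real.sqrt ((qx - A * Real.cos (a * γ)) ^ 2 +
            (qy - B * Real.sin (b * γ)) ^ 2) ≤
          max (B * Real.sin (π / (2 * a))) (A * Real.sin (π / (2 * b))) := by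
  intro qx qy hqx hqy
  obtain ⟨hx₁, hx₂⟩ := abs_le.mp (by rwa [abs_div, abs_of_pos hA, div_le_one hA] : |qx / A| ≤ 1)
  obtain ⟨hy₁, hy₂⟩ := abs_le.mp (by rwa [abs_div, abs_of_pos hB, div_le_one hB] : |qy / B| ≤ 1)
  set c := arccos (qx / A)
  set σ := arcsin (qy / B)
  obtain ⟨k, hk⟩ := exists_abs_sin_add_int_mul_sub_sin_le (h := π / a) (by positivity)
    (div_le_self pi_pos.le (by exact_mod_cast ha)) (b * c / a) σ
  obtain ⟨γ, hγa, hγb⟩ := exists_cos_mul_eq_and_sin_mul_eq hab haodd c k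
  refine ⟨γ, ?_⟩
  have hqx : A * cos (a * γ) = qx := by rw [hγa, cos_arccos hx₁ hx₂, mul_div_cancel₀ _ hA.ne']
  have hqy : B * sin σ = qy := by rw [sin_arcsin hy₁ hy₂, mul_div_cancel₀ _ hB.ne']
  calc √((qx - A * cos (a * γ)) ^ 2 + (qy - B * sin (b * γ)) ^ 2)
      = B * |sin (b * c / a + k * (π / a)) - sin σ| := by
        rw [hqx, sub_self, zero_pow two_ne_zero, zero_add, sqrt_sq_eq_abs, hγb, ← hqy,
          ← mul_sub, abs_mul, abs_of_pos hB, abs_sub_comm]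
    _ ≤ B * sin (π / (2 * a)) := by
        rw [mul_comm 2, ← div_div]; exact mul_le_mul_of_nonneg_left hk hB.le
    _ ≤ _ := le_max_left _ _

/-- Complete coverage: for coprime positive frequencies `a, b` with `a` odd,
every point of the rectangle `[−A, A] × [−B, B]` is within distance
`max (B sin(π/(2a))) (A sin(π/(2b)))` of some point of the Lissajous curve
`γ ↦ (A cos(aγ), B sin(bγ))`. Hence a robot with sensing radius exceeding
this bound sweeping the whole curve covers the whole rectangle. -/
theorem lissajous_complete_coverage
    (A B : ℝ) (hA : 0 < A) (hB : 0 < B)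
    (a b : ℕ) (ha : 0 < a) (hb : 0 < b)
    (hab : Nat.Coprime a b) (haodd : Odd a) :
    ∀ qx qy : ℝ, |qx| ≤ A → |qy| ≤ B →
      ∃ γ : ℝ,
        Real.sqrt ((qx - A * Real.cos (a * γ)) ^ 2 +
            (qy - B * Real.sin (b * γ)) ^ 2) ≤
          max (B * Real.sin (π / (2 * a))) (A * Real.sin (π / (2 * b))) :=
  lissajous_complete_coverage_general A B hA hB a b ha hab haodd
end

section
/- Let N ≥ 2 be an integer, p ∈ ℤ, θ₀ ∈ ℝ, K ∈ ℝ, and let θ*_i = θ₀ + 2πp·i/N (i = 0, …, N−1) be the splay configuration. Define V(θ) = −K Σ_{i=0}^{N−1} Σ_{j ∈ {i−1, i+1} mod N} cos(θ_j − θ_i). Then for every direction v ∈ ℝ^N, the function g(s) = V(θ* + s·v) satisfies g''(0) = 2K cos(2πp/N) · Σ_{i=0}^{N−1} (v_{i+1} − v_i)² (indices mod N). In particular, if K > 0 and cos(2πp/N) < 0 (i.e., p lies in the stable set P_ζ of Theorem 1), then g''(0) ≤ 0 for every v, so the splay state is a second-order critical point of maximum type for V. -/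
open Real

/-!
Pairing each edge `(i, i + 1)` of the ring with its reverse gives
`V θ = -2K Σᵢ cos (θ (i + 1) - θ i)`. Along the line `θ* + s v` each summand is
`cos (aᵢ + s bᵢ)`, whose second derivative at `0` is `-cos aᵢ · bᵢ²`. At the splay state every
phase difference `aᵢ` is `2πp/N` modulo `2π`, so the common factor `cos (2πp/N)` comes out of
the sum.
-/

theorem cos_two_pi_mul_div_eq_of_modEq {N : ℕ} (p : ℤ) {a b : ℤ} (h : a ≡ b [ZMOD N]) :
    cos (2 * π * p * a / N) = cos (2 * π * p * b / N) := by
  rcases eq_or_ne N 0 with rfl | hN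
  · rw [Nat.cast_zero, Int.modEq_zero_iff.1 h]
  obtain ⟨k, hk⟩ := h.dvd
  have hb : (b : ℝ) = a + N * k := by
    rw [← sub_eq_iff_eq_add']; exact_mod_cast hk
  rw [hb, ← cos_add_int_mul_two_pi _ (p * k)]
  congr 1
  push_cast
  field_simp

noncomputable def splayState (N : ℕ) (p : ℤ) (θ₀ : ℝ) (i : ZMod N) : ℝ :=
  θ₀ + 2 * π * p * i.val / N

theorem cos_splayState_sub {N : ℕ} [NeZero N] (p : ℤ) (θ₀ : ℝ) {i j : ZMod N} {m : ℤ}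
    (hm : (m : ZMod N) = j - i) :
    cos (splayState N p θ₀ j - splayState N p θ₀ i) = cos (2 * π * p * m / N) := by
  have hmod : ((j.val - i.val : ℤ) : ZMod N) = (m : ZMod N) := by
    push_cast
    rw [ZMod.natCast_zmod_val, ZMod.natCast_zmod_val, hm]
  rw [← cos_two_pi_mul_div_eq_of_modEq p ((ZMod.intCast_eq_intCast_iff _ _ _).1 hmod)]
  congr 1
  unfold splayState
  push_cast
  ring

theorem cos_splayState_succ_sub {N : ℕ} [NeZero N] (p : ℤ) (θ₀ : ℝ) (i : ZMod N) :
    cos (splayState N p θ₀ (i + 1) - splayState N p θ₀ i) = cos (2 * π * p / N) := by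
  rw [cos_splayState_sub p θ₀ (m := 1) (by simp), Int.cast_one, mul_one]

theorem sum_cos_sub_add_cos_sub_eq {G : Type*} [AddGroup G] [Fintype G] (θ : G → ℝ) (c : G) :
    ∑ i, (cos (θ (i + c) - θ i) + cos (θ (i - c) - θ i)) = 2 * ∑ i, cos (θ (i + c) - θ i) := by
  have hreverse : ∑ i, cos (θ (i - c) - θ i) = ∑ i, cos (θ (i + c) - θ i) := by
    rw [← Equiv.sum_comp (Equiv.addRight c)]
    refine Finset.sum_congr rfl fun i _ => ?_
    rw [Equiv.coe_addRight, add_sub_cancel_right, ← cos_neg, neg_sub]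
  rw [Finset.sum_add_distrib, hreverse, two_mul]

section AffineCos

variable {ι : Type*} (s : Finset ι) (a b : ι → ℝ) (t : ℝ)

theorem hasDerivAt_sum_cos_affine :
    HasDerivAt (fun t => ∑ i ∈ s, cos (a i + t * b i)) (-∑ i ∈ s, sin (a i + t * b i) * b i) t := by
  rw [← Finset.sum_neg_distrib]
  refine HasDerivAt.fun_sum fun i _ => ?_
  simpa using (((hasDerivAt_id t).mul_const (b i)).const_add (a i)).cos

theorem deriv_deriv_sum_cos_affine :
    deriv (deriv fun t => ∑ i ∈ s, cos (a i + t * b i)) t =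
      -∑ i ∈ s, cos (a i + t * b i) * b i ^ 2 := by
  have hderiv : deriv (fun t => ∑ i ∈ s, cos (a i + t * b i)) =
      fun t => -∑ i ∈ s, sin (a i + t * b i) * b i :=
    funext fun t => (hasDerivAt_sum_cos_affine s a b t).deriv
  have hsecond : HasDerivAt (fun t => ∑ i ∈ s, sin (a i + t * b i) * b i)
      (∑ i ∈ s, cos (a i + t * b i) * b i ^ 2) t := by
    refine HasDerivAt.fun_sum fun i _ => ?_
    simpa [sq, mul_assoc] using
      ((((hasDerivAt_id t).mul_const (b i)).const_add (a i)).sin).mul_const (b i)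
  rw [hderiv, deriv.fun_neg, hsecond.deriv]

end AffineCos

theorem splay_second_derivative_of_lyapunov_general
    (N : ℕ) [NeZero N] (p : ℤ) (θ₀ K : ℝ)
    (θs : ZMod N → ℝ)
    (hθs : ∀ i : ZMod N, θs i = θ₀ + 2 * π * p * (i.val : ℝ) / N)
    (V : (ZMod N → ℝ) → ℝ)
    (hV : ∀ θ : ZMod N → ℝ,
      V θ = -K * ∑ i : ZMod N,
        (Real.cos (θ (i + 1) - θ i) + Real.cos (θ (i - 1) - θ i)))
    (v : ZMod N → ℝ) (g : ℝ → ℝ)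
    (hg : ∀ s : ℝ, g s = V (fun i => θs i + s * v i)) :
    deriv (deriv g) 0 =
      2 * K * Real.cos (2 * π * p / N) *
        ∑ i : ZMod N, (v (i + 1) - v i) ^ 2 ∧
    (0 < K → Real.cos (2 * π * p / N) < 0 → deriv (deriv g) 0 ≤ 0) := by
  have hθ : θs = splayState N p θ₀ := funext hθs
  have hV' : ∀ θ : ZMod N → ℝ, V θ = -2 * K * ∑ i, cos (θ (i + 1) - θ i) := fun θ => by
    rw [hV, sum_cos_sub_add_cos_sub_eq]
    ring
  have hg' : g = fun s => -2 * K *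
      ∑ i, cos ((θs (i + 1) - θs i) + s * (v (i + 1) - v i)) := by
    funext s
    rw [hg, hV']
    congr 2 with i
    ring_nf
  have hsecond : deriv (deriv g) 0 =
      2 * K * cos (2 * π * p / N) * ∑ i, (v (i + 1) - v i) ^ 2 := by
    rw [hg', deriv_const_mul_field', deriv_const_mul_field, deriv_deriv_sum_cos_affine]
    simp only [zero_mul, add_zero, hθ, cos_splayState_succ_sub, ← Finset.mul_sum]
    ring
  refine ⟨hsecond, fun hK hcos => hsecond ▸ ?_⟩
  exact mul_nonpos_of_nonpos_of_nonneg (by nlinarith)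
    (Finset.sum_nonneg fun i _ => sq_nonneg _)

/-- Second-order behaviour of the Lyapunov function at the splay state: for
any direction `v`, the function `g(s) = V(θ* + s v)` satisfies
`g''(0) = 2K cos(2πp/N) Σ_i (v_{i+1} − v_i)²`; in particular, if `K > 0` and
`cos(2πp/N) < 0` then `g''(0) ≤ 0`, so the splay state is a second-order
critical point of maximum type for `V`. -/
theorem splay_second_derivative_of_lyapunov
    (N : ℕ) [NeZero N] (hN : 2 ≤ N) (p : ℤ) (θ₀ K : ℝ)
    (θs : ZMod N → ℝ)
    (hθs : ∀ i : ZMod N, θs i = θ₀ + 2 * π * p * (i.val : ℝ) / N)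
    (V : (ZMod N → ℝ) → ℝ)
    (hV : ∀ θ : ZMod N → ℝ,
      V θ = -K * ∑ i : ZMod N,
        (Real.cos (θ (i + 1) - θ i) + Real.cos (θ (i - 1) - θ i)))
    (v : ZMod N → ℝ) (g : ℝ → ℝ)
    (hg : ∀ s : ℝ, g s = V (fun i => θs i + s * v i)) :
    deriv (deriv g) 0 =
      2 * K * Real.cos (2 * π * p / N) *
        ∑ i : ZMod N, (v (i + 1) - v i) ^ 2 ∧
    (0 < K → Real.cos (2 * π * p / N) < 0 → deriv (deriv g) 0 ≤ 0) :=
  splay_second_derivative_of_lyapunov_general N p θ₀ K θs hθs V hV v g hg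
end

section
/- Let N ≥ 2 be an integer, p ∈ ℤ, θ₀ ∈ ℝ, K > 0, ω ∈ ℝ, and let θ*_i = θ₀ + 2πp·i/N be the splay configuration. Suppose agent i is perturbed to θ*_i + δ while its two ring neighbors remain at their equilibrium values θ*_{i−1} and θ*_{i+1}. Then the instantaneous velocity of agent i under the time-inverted Kuramoto dynamics equals ω − K[ sin(θ*_{i+1} − θ*_i − δ) + sin(θ*_{i−1} − θ*_i − δ) ] = ω + 2K cos(2πp/N) sin δ. Consequently, if cos(2πp/N) < 0 and sin δ ≠ 0, then the deviation of the velocity from ω has sign opposite to sin δ, i.e., the feedback instantaneously pushes the perturbed agent back toward the equilibrium (resiliency to type I failures, Theorem 2). -/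
open Real

/-
The two neighbours of the perturbed agent sit at phase offsets `±a`, `a = 2πp/N`, from its
equilibrium phase, so by `sin (x - δ) = sin x cos δ - cos x sin δ` the even parts cancel and the
coupling term is `-2 cos a sin δ`. Multiplying the resulting velocity deviation `2K cos a sin δ` by
`sin δ` gives `2K cos a sin² δ`, which is negative when `cos a < 0` and `sin δ ≠ 0`.
-/

lemma sin_sub_add_sin_neg_sub (a δ : ℝ) :
    sin (a - δ) + sin (-a - δ) = -(2 * cos a * sin δ) := by
  rw [sin_sub, sin_sub, sin_neg, cos_neg]
  ring

lemma sub_eq_of_forall_eq_add_mul_div {f : ℤ → ℝ} {θ₀ c M : ℝ}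
    (hf : ∀ j : ℤ, f j = θ₀ + c * j / M) (i k : ℤ) :
    f (i + k) - f i = k * (c / M) := by
  rw [hf, hf]
  push_cast
  ring

lemma two_mul_mul_mul_mul_self_neg {K c s : ℝ} (hK : 0 < K) (hc : c < 0) (hs : s ≠ 0) :
    (2 * K * c * s) * s < 0 := by
  have hKc : 2 * K * c < 0 := mul_neg_of_pos_of_neg (by positivity) hc
  calc (2 * K * c * s) * s = (2 * K * c) * (s * s) := by ring
    _ < 0 := mul_neg_of_neg_of_pos hKc (mul_self_pos.mpr hs)

theorem perturbed_agent_velocity_restoring_general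
    (N : ℕ) (p : ℤ) (θ₀ ω K δ : ℝ) (hK : 0 < K)
    (θs : ℤ → ℝ) (hθs : ∀ j : ℤ, θs j = θ₀ + 2 * π * p * j / N) :
    ∀ i : ℤ,
      ω - K * (Real.sin (θs (i + 1) - (θs i + δ)) +
               Real.sin (θs (i - 1) - (θs i + δ))) =
        ω + 2 * K * Real.cos (2 * π * p / N) * Real.sin δ ∧
      (Real.cos (2 * π * p / N) < 0 → Real.sin δ ≠ 0 →
        (2 * K * Real.cos (2 * π * p / N) * Real.sin δ) * Real.sin δ < 0) := by
  intro i
  have hnext : θs (i + 1) - (θs i + δ) = 2 * π * p / N - δ := by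
    have := sub_eq_of_forall_eq_add_mul_div hθs i 1
    push_cast at this
    linarith
  have hprev : θs (i - 1) - (θs i + δ) = -(2 * π * p / N) - δ := by
    have := sub_eq_of_forall_eq_add_mul_div hθs i (-1)
    push_cast at this
    rw [← sub_eq_add_neg] at this
    linarith
  refine ⟨?_, fun hc hs => two_mul_mul_mul_mul_self_neg hK hc hs⟩
  rw [hnext, hprev, sin_sub_add_sin_neg_sub]
  ring

/-- Resiliency to type I failures: if agent `i` of the splay configuration
`θ*_j = θ₀ + 2πp·j/N` is perturbed by `δ` while its ring neighbours stay at
equilibrium, its instantaneous velocity under the time-inverted Kuramoto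
dynamics equals `ω + 2K cos(2πp/N) sin δ`; hence if `cos(2πp/N) < 0` and
`sin δ ≠ 0`, the deviation of the velocity from `ω` has sign opposite to
`sin δ`, pushing the perturbed agent back toward equilibrium. -/
theorem perturbed_agent_velocity_restoring
    (N : ℕ) (hN : 2 ≤ N) (p : ℤ) (θ₀ ω K δ : ℝ) (hK : 0 < K)
    (θs : ℤ → ℝ) (hθs : ∀ j : ℤ, θs j = θ₀ + 2 * π * p * j / N) :
    ∀ i : ℤ,
      ω - K * (Real.sin (θs (i + 1) - (θs i + δ)) +
               Real.sin (θs (i - 1) - (θs i + δ))) =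
        ω + 2 * K * Real.cos (2 * π * p / N) * Real.sin δ ∧
      (Real.cos (2 * π * p / N) < 0 → Real.sin δ ≠ 0 →
        (2 * K * Real.cos (2 * π * p / N) * Real.sin δ) * Real.sin δ < 0) :=
  perturbed_agent_velocity_restoring_general N p θ₀ ω K δ hK θs hθs
end
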